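/- Consider a BPVE with first moments m_n > 0 for all n. If inf_{n∈ℕ} ∏_{i=0}^{n} m_i = 0, then the BPVE dies out, i.e. p_e = 1. -/
import Mathlib


open Filter ENNReal

/-- Probability generating function `Φ_n(z) := ∑_i ρ_n(i) z^i` of the `n`-th offspring
distribution of a branching process in varying environment (BPVE). -/
noncomputable def Phi (ρ : ℕ → ℕ → ℝ) (n : ℕ) (z : ℝ) : ℝ :=
  ∑' i : ℕ, ρ n i * z ^ i

/-- The iterated generating functions `H_0(z) := z`, `H_{n+1} := H_n ∘ Φ_n`;
`H_n(0)` is the probability of extinction by generation `n`, and the extinction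
probability is `p_e = lim_n H_n(0)`. -/
noncomputable def Hseq (ρ : ℕ → ℕ → ℝ) : ℕ → ℝ → ℝ
  | 0 => fun z => z
  | n + 1 => fun z => Hseq ρ n (Phi ρ n z)

/-- First moment `m_n := ∑_i i ρ_n(i) ∈ [0,∞]` of the `n`-th offspring distribution. -/
noncomputable def mom (ρ : ℕ → ℕ → ℝ) (n : ℕ) : ℝ≥0∞ :=
  ∑' i : ℕ, (i : ℝ≥0∞) * ENNReal.ofReal (ρ n i)

/-- Second moment `m_n⁽²⁾ := ∑_i i² ρ_n(i) ∈ [0,∞]` of the `n`-th offspring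
distribution. -/
noncomputable def mom2 (ρ : ℕ → ℕ → ℝ) (n : ℕ) : ℝ≥0∞ :=
  ∑' i : ℕ, (i : ℝ≥0∞) ^ 2 * ENNReal.ofReal (ρ n i)

set_option linter.unusedSectionVars false

section
variable (ρ : ℕ → ℕ → ℝ) (hρ0 : ∀ n i, 0 ≤ ρ n i) (hρ1 : ∀ n, HasSum (ρ n) 1)
include hρ0 hρ1

lemma phi_summable (n : ℕ) {z : ℝ} (h0 : 0 ≤ z) (h1 : z ≤ 1) :
    Summable (fun i => ρ n i * z ^ i) := by
  refine Summable.of_nonneg_of_le (fun i => mul_nonneg (hρ0 n i) (pow_nonneg h0 i)) (fun i => ?_) (hρ1 n).summable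
  calc ρ n i * z ^ i ≤ ρ n i * 1 := by
        exact mul_le_mul_of_nonneg_left (pow_le_one₀ h0 h1) (hρ0 n i)
    _ = ρ n i := mul_one _

lemma phi_nonneg (n : ℕ) {z : ℝ} (h0 : 0 ≤ z) : 0 ≤ Phi ρ n z :=
  tsum_nonneg fun i => mul_nonneg (hρ0 n i) (pow_nonneg h0 i)

lemma phi_le_one (n : ℕ) {z : ℝ} (h0 : 0 ≤ z) (h1 : z ≤ 1) : Phi ρ n z ≤ 1 := by
  have := Summable.tsum_le_tsum (f := fun i => ρ n i * z ^ i) (g := ρ n)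
    (fun i => by
      calc ρ n i * z ^ i ≤ ρ n i * 1 :=
          mul_le_mul_of_nonneg_left (pow_le_one₀ h0 h1) (hρ0 n i)
        _ = ρ n i := mul_one _)
    (phi_summable ρ hρ0 hρ1 n h0 h1) (hρ1 n).summable
  rwa [(hρ1 n).tsum_eq] at this

lemma phi_mono (n : ℕ) {z w : ℝ} (h0 : 0 ≤ z) (hzw : z ≤ w) (h1 : w ≤ 1) :
    Phi ρ n z ≤ Phi ρ n w := by
  refine Summable.tsum_le_tsum (fun i => ?_) (phi_summable ρ hρ0 hρ1 n h0 (hzw.trans h1))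
    (phi_summable ρ hρ0 hρ1 n (h0.trans hzw) h1)
  exact mul_le_mul_of_nonneg_left (pow_le_pow_left₀ h0 hzw i) (hρ0 n i)

lemma key (n : ℕ) {z : ℝ} (h0 : 0 ≤ z) (h1 : z ≤ 1) :
    ENNReal.ofReal (1 - Phi ρ n z) ≤ mom ρ n * ENNReal.ofReal (1 - z) := by
  have hsum := phi_summable ρ hρ0 hρ1 n h0 h1
  have heq : 1 - Phi ρ n z = ∑' i : ℕ, (ρ n i - ρ n i * z ^ i) := by
    rw [Summable.tsum_sub (hρ1 n).summable hsum, (hρ1 n).tsum_eq, Phi]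
  have hnn : ∀ i : ℕ, 0 ≤ ρ n i - ρ n i * z ^ i := fun i => by
    have : ρ n i * z ^ i ≤ ρ n i := by
      calc ρ n i * z ^ i ≤ ρ n i * 1 :=
          mul_le_mul_of_nonneg_left (pow_le_one₀ h0 h1) (hρ0 n i)
        _ = ρ n i := mul_one _
    linarith
  rw [heq, ENNReal.ofReal_tsum_of_nonneg hnn ((hρ1 n).summable.sub hsum)]
  have hterm : ∀ i : ℕ, ENNReal.ofReal (ρ n i - ρ n i * z ^ i)
      ≤ (i : ℝ≥0∞) * ENNReal.ofReal (ρ n i) * ENNReal.ofReal (1 - z) := fun i => by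
    have h1z : 0 ≤ 1 - z := by linarith
    have hb : ρ n i - ρ n i * z ^ i ≤ (i : ℝ) * ρ n i * (1 - z) := by
      have hgeo : 1 - z ^ i = (1 - z) * ∑ k ∈ Finset.range i, z ^ k := by
        have := geom_sum_mul z i
        ring_nf
        ring_nf at this
        linarith
      have hsumb : ∑ k ∈ Finset.range i, z ^ k ≤ (i : ℝ) := by
        calc ∑ k ∈ Finset.range i, z ^ k ≤ ∑ k ∈ Finset.range i, 1 :=
            Finset.sum_le_sum fun k _ => pow_le_one₀ h0 h1
          _ = (i : ℝ) := by simp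
      have : ρ n i - ρ n i * z ^ i = ρ n i * (1 - z ^ i) := by ring
      rw [this, hgeo]
      calc ρ n i * ((1 - z) * ∑ k ∈ Finset.range i, z ^ k)
          ≤ ρ n i * ((1 - z) * (i : ℝ)) := by
            apply mul_le_mul_of_nonneg_left _ (hρ0 n i)
            exact mul_le_mul_of_nonneg_left hsumb h1z
        _ = (i : ℝ) * ρ n i * (1 - z) := by ring
    calc ENNReal.ofReal (ρ n i - ρ n i * z ^ i)
        ≤ ENNReal.ofReal ((i : ℝ) * ρ n i * (1 - z)) := ENNReal.ofReal_le_ofReal hb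
      _ = (i : ℝ≥0∞) * ENNReal.ofReal (ρ n i) * ENNReal.ofReal (1 - z) := by
          rw [ENNReal.ofReal_mul (mul_nonneg (Nat.cast_nonneg i) (hρ0 n i)), ENNReal.ofReal_mul (by positivity)]
          simp [ENNReal.ofReal_natCast]
  calc ∑' i : ℕ, ENNReal.ofReal (ρ n i - ρ n i * z ^ i)
      ≤ ∑' i : ℕ, (i : ℝ≥0∞) * ENNReal.ofReal (ρ n i) * ENNReal.ofReal (1 - z) :=
        ENNReal.tsum_le_tsum hterm
    _ = mom ρ n * ENNReal.ofReal (1 - z) := by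
        rw [ENNReal.tsum_mul_right]; rfl
end

section H
variable (ρ : ℕ → ℕ → ℝ) (hρ0 : ∀ n i, 0 ≤ ρ n i) (hρ1 : ∀ n, HasSum (ρ n) 1)
include hρ0 hρ1

lemma Hmono : ∀ (n : ℕ) {z w : ℝ}, 0 ≤ z → z ≤ w → w ≤ 1 →
    Hseq ρ n z ≤ Hseq ρ n w := by
  intro n
  induction n with
  | zero => intro z w _ h _; exact h
  | succ n ih =>
    intro z w h0 hzw h1
    show Hseq ρ n (Phi ρ n z) ≤ Hseq ρ n (Phi ρ n w)
    exact ih (phi_nonneg ρ hρ0 hρ1 n h0) (phi_mono ρ hρ0 hρ1 n h0 hzw h1)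
      (phi_le_one ρ hρ0 hρ1 n (h0.trans hzw) h1)

lemma Hle_one : ∀ (n : ℕ) {z : ℝ}, 0 ≤ z → z ≤ 1 → Hseq ρ n z ≤ 1 := by
  intro n
  induction n with
  | zero => intro z _ h; exact h
  | succ n ih =>
    intro z h0 h1
    exact ih (phi_nonneg ρ hρ0 hρ1 n h0) (phi_le_one ρ hρ0 hρ1 n h0 h1)

lemma Hbound : ∀ (n : ℕ) {z : ℝ}, 0 ≤ z → z ≤ 1 →
    ENNReal.ofReal (1 - Hseq ρ n z)
      ≤ (∏ i ∈ Finset.range n, mom ρ i) * ENNReal.ofReal (1 - z) := by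
  intro n
  induction n with
  | zero => intro z _ _; simp [Hseq]
  | succ n ih =>
    intro z h0 h1
    calc ENNReal.ofReal (1 - Hseq ρ (n + 1) z)
        = ENNReal.ofReal (1 - Hseq ρ n (Phi ρ n z)) := rfl
      _ ≤ (∏ i ∈ Finset.range n, mom ρ i) * ENNReal.ofReal (1 - Phi ρ n z) :=
          ih (phi_nonneg ρ hρ0 hρ1 n h0) (phi_le_one ρ hρ0 hρ1 n h0 h1)
      _ ≤ (∏ i ∈ Finset.range n, mom ρ i) * (mom ρ n * ENNReal.ofReal (1 - z)) :=
          mul_le_mul_right (key ρ hρ0 hρ1 n h0 h1) _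
      _ = (∏ i ∈ Finset.range (n + 1), mom ρ i) * ENNReal.ofReal (1 - z) := by
          rw [Finset.prod_range_succ]; ring

lemma Hzero_mono : Monotone (fun n => Hseq ρ n 0) := by
  refine monotone_nat_of_le_succ fun n => ?_
  show Hseq ρ n 0 ≤ Hseq ρ n (Phi ρ n 0)
  exact Hmono ρ hρ0 hρ1 n le_rfl (phi_nonneg ρ hρ0 hρ1 n le_rfl)
    (phi_le_one ρ hρ0 hρ1 n le_rfl zero_le_one)
end H

/-- a BPVE with positive first moments such that
`inf_n ∏_{i=0}^n m_i = 0` dies out, i.e. `p_e = 1`. -/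
theorem bpve_extinction_of_inf_prod_mean_zero (ρ : ℕ → ℕ → ℝ)
    (hρ0 : ∀ n i, 0 ≤ ρ n i) (hρ1 : ∀ n, HasSum (ρ n) 1)
    (hρlt : ∀ n, ρ n 0 < 1)
    (hm : ∀ n, 0 < mom ρ n)
    (hinf : ⨅ n : ℕ, ∏ i ∈ Finset.range (n + 1), mom ρ i = 0)
    (pe : ℝ) (hpe : Tendsto (fun n => Hseq ρ n 0) atTop (nhds pe)) :
    pe = 1 := by
  have hle : pe ≤ 1 := by
    refine le_of_tendsto hpe (Eventually.of_forall fun n => ?_)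
    exact Hle_one ρ hρ0 hρ1 n le_rfl zero_le_one
  refine le_antisymm hle ?_
  by_contra hlt
  push_neg at hlt
  set ε := 1 - pe with hε
  have hεpos : 0 < ε := by linarith
  have : ⨅ n : ℕ, ∏ i ∈ Finset.range (n + 1), mom ρ i < ENNReal.ofReal ε := by
    rw [hinf]; exact ENNReal.ofReal_pos.mpr hεpos
  obtain ⟨n, hn⟩ := iInf_lt_iff.mp this
  have hb := (Hbound ρ hρ0 hρ1 (n + 1) (z := 0) le_rfl zero_le_one)
  rw [sub_zero, ENNReal.ofReal_one, mul_one] at hb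
  have : ENNReal.ofReal (1 - Hseq ρ (n + 1) 0) < ENNReal.ofReal ε := lt_of_le_of_lt hb hn
  rw [ENNReal.ofReal_lt_ofReal_iff hεpos] at this
  have hge : Hseq ρ (n + 1) 0 ≤ pe :=
    ge_of_tendsto hpe (eventually_atTop.mpr ⟨n + 1, fun m hm' => Hzero_mono ρ hρ0 hρ1 hm'⟩)
  rw [hε] at this
  linarith
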